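/- arXiv:1903.08528 — 2 statements merged into one kernel-verified Lean document; each statement's English description precedes it below -/
import Mathlib

section
/- Let (P,Ψ) be c-transforms of each other with cost c(p,m,q) = sΥ + zZ/m. If q_0 ∈ ∂_c P(p_0,m_0) with p_0 = (s_0,z_0), and additionally both P(·, m_0) is differentiable at p_0 and P(p_0, ·) is differentiable at m_0, then m_0 ∂_m P(p_0, m_0) = − z_0 ∂_z P(p_0, m_0). -/
/-- if (P,Ψ) are c-transforms of each other for c(p,m,q) = sΥ + zZ/m,
q₀ ∈ ∂_c P(p₀,m₀), and P(·,m₀) is differentiable at p₀ = (s₀,z₀) while P(p₀,·) is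
differentiable at m₀, then m₀ ∂ₘP(p₀,m₀) = −z₀ ∂_z P(p₀,m₀). -/
theorem cTransform_m_derivative_identity
    (l r0 H : ℝ) (hl : 0 < l) (hr0 : 0 < r0) (hH : 0 < H)
    (I0 : Set ℝ) (hI0pos : I0 ⊆ Set.Ioi 0)
    (P : (ℝ × ℝ) → ℝ → ℝ) (Ψ : ℝ × ℝ → ℝ)
    (hP : ∀ (p : ℝ × ℝ), ∀ m : ℝ, 0 < m →
      P p m = sSup ((fun q : ℝ × ℝ => p.1 * q.1 + p.2 * q.2 / m - Ψ q) ''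
        Metric.closedBall 0 l))
    (hΨ : ∀ q : ℝ × ℝ,
      Ψ q = sSup ((fun pm : (ℝ × ℝ) × ℝ =>
        pm.1.1 * q.1 + pm.1.2 * q.2 / pm.2 - P pm.1 pm.2) ''
        ((Set.Ico (0:ℝ) (1/(2*r0^2)) ×ˢ Set.Icc (0:ℝ) H) ×ˢ I0)))
    (p0 : ℝ × ℝ) (m0 : ℝ) (hm0 : m0 ∈ I0)
    (q0 : ℝ × ℝ) (hq0 : q0 ∈ Metric.closedBall (0 : ℝ × ℝ) l)
    (heq : P p0 m0 + Ψ q0 = p0.1 * q0.1 + p0.2 * q0.2 / m0)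
    (hdiffp : DifferentiableAt ℝ (fun p => P p m0) p0)
    (hdiffm : DifferentiableAt ℝ (fun m => P p0 m) m0) :
    m0 * deriv (fun m => P p0 m) m0 = - p0.2 * fderiv ℝ (fun p => P p m0) p0 (0, 1) := by
  have hm0pos : 0 < m0 := hI0pos hm0
  have hm0ne : m0 ≠ 0 := ne_of_gt hm0pos
  -- bounds on coordinates of points in the ball
  have hcoord : ∀ q : ℝ × ℝ, q ∈ Metric.closedBall (0 : ℝ × ℝ) l →
      |q.1| ≤ l ∧ |q.2| ≤ l := by
    intro q hq
    rw [Metric.mem_closedBall, dist_zero_right] at hq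
    constructor
    · exact le_trans (norm_fst_le q) hq
    · exact le_trans (norm_snd_le q) hq
  by_cases hbdd : BddBelow (Ψ '' Metric.closedBall (0 : ℝ × ℝ) l)
  · -- main case
    obtain ⟨b, hb⟩ := hbdd
    have hbd : ∀ q ∈ Metric.closedBall (0 : ℝ × ℝ) l, b ≤ Ψ q := by
      intro q hq; exact hb ⟨q, hq, rfl⟩
    have hBA : ∀ (p : ℝ × ℝ) (m : ℝ), 0 < m →
        BddAbove ((fun q : ℝ × ℝ => p.1 * q.1 + p.2 * q.2 / m - Ψ q) ''
          Metric.closedBall 0 l) := by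
      intro p m hm
      refine ⟨|p.1| * l + |p.2| * l / m - b, ?_⟩
      rintro x ⟨q, hq, rfl⟩
      obtain ⟨h1, h2⟩ := hcoord q hq
      have e1 : p.1 * q.1 ≤ |p.1| * l := by
        calc p.1 * q.1 ≤ |p.1 * q.1| := le_abs_self _
        _ = |p.1| * |q.1| := abs_mul _ _
        _ ≤ |p.1| * l := by gcongr
      have e2 : p.2 * q.2 ≤ |p.2| * l := by
        calc p.2 * q.2 ≤ |p.2 * q.2| := le_abs_self _
        _ = |p.2| * |q.2| := abs_mul _ _
        _ ≤ |p.2| * l := by gcongr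
      have e3 : p.2 * q.2 / m ≤ |p.2| * l / m := by gcongr
      have := hbd q hq
      simp only []
      linarith
    have key : ∀ (p : ℝ × ℝ) (m : ℝ), 0 < m →
        p.1 * q0.1 + p.2 * q0.2 / m - Ψ q0 ≤ P p m := by
      intro p m hm
      rw [hP p m hm]
      exact le_csSup (hBA p m hm) ⟨q0, hq0, rfl⟩
    -- derivative in m
    have hhm : HasDerivAt (fun m : ℝ => p0.1 * q0.1 + p0.2 * q0.2 / m)
        (p0.2 * q0.2 * (-(m0 ^ 2)⁻¹)) m0 := by
      have h := ((hasDerivAt_inv hm0ne).const_mul (p0.2 * q0.2)).const_add (p0.1 * q0.1)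
      have he : (fun m : ℝ => p0.1 * q0.1 + p0.2 * q0.2 / m)
          = fun m : ℝ => p0.1 * q0.1 + p0.2 * q0.2 * m⁻¹ := by
        funext m; rw [div_eq_mul_inv]
      rw [he]
      exact h
    have hFm : HasDerivAt (fun m => P p0 m - (p0.1 * q0.1 + p0.2 * q0.2 / m))
        (deriv (fun m => P p0 m) m0 - p0.2 * q0.2 * (-(m0 ^ 2)⁻¹)) m0 :=
      hdiffm.hasDerivAt.sub hhm
    have hminm : IsLocalMin (fun m => P p0 m - (p0.1 * q0.1 + p0.2 * q0.2 / m)) m0 := by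
      filter_upwards [Ioi_mem_nhds hm0pos] with m hm
      have := key p0 m hm
      show P p0 m0 - (p0.1 * q0.1 + p0.2 * q0.2 / m0) ≤ P p0 m - (p0.1 * q0.1 + p0.2 * q0.2 / m)
      linarith
    have hder0 : deriv (fun m => P p0 m - (p0.1 * q0.1 + p0.2 * q0.2 / m)) m0 = 0 :=
      hminm.deriv_eq_zero
    rw [hFm.deriv] at hder0
    have hderivm : deriv (fun m => P p0 m) m0 = p0.2 * q0.2 * (-(m0 ^ 2)⁻¹) := by
      linarith
    -- derivative in p
    set clm : (ℝ × ℝ) →L[ℝ] ℝ :=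
      q0.1 • (ContinuousLinearMap.fst ℝ ℝ ℝ) + (q0.2 / m0) • (ContinuousLinearMap.snd ℝ ℝ ℝ)
      with hclm
    have hclmapp : ∀ p : ℝ × ℝ, clm p = p.1 * q0.1 + p.2 * q0.2 / m0 := by
      intro p
      simp [hclm, ContinuousLinearMap.add_apply, ContinuousLinearMap.smul_apply]
      ring
    have hL : HasFDerivAt (fun p : ℝ × ℝ => p.1 * q0.1 + p.2 * q0.2 / m0) clm p0 := by
      have : (fun p : ℝ × ℝ => p.1 * q0.1 + p.2 * q0.2 / m0) = ⇑clm := by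
        funext p; rw [hclmapp]
      rw [this]
      exact clm.hasFDerivAt
    have hGp : HasFDerivAt (fun p : ℝ × ℝ => P p m0 - (p.1 * q0.1 + p.2 * q0.2 / m0))
        (fderiv ℝ (fun p => P p m0) p0 - clm) p0 :=
      hdiffp.hasFDerivAt.sub hL
    have hminp : IsLocalMin (fun p : ℝ × ℝ => P p m0 - (p.1 * q0.1 + p.2 * q0.2 / m0)) p0 := by
      apply Filter.Eventually.of_forall
      intro p
      have := key p m0 hm0pos
      show P p0 m0 - (p0.1 * q0.1 + p0.2 * q0.2 / m0) ≤ P p m0 - (p.1 * q0.1 + p.2 * q0.2 / m0)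
      linarith
    have hfd0 : fderiv ℝ (fun p : ℝ × ℝ => P p m0 - (p.1 * q0.1 + p.2 * q0.2 / m0)) p0 = 0 :=
      hminp.fderiv_eq_zero
    rw [hGp.fderiv] at hfd0
    have hfd : fderiv ℝ (fun p => P p m0) p0 = clm := by
      have := sub_eq_zero.mp hfd0
      exact this
    rw [hfd, hderivm]
    have : clm ((0 : ℝ), (1 : ℝ)) = q0.2 / m0 := by
      rw [hclmapp]; simp
    rw [this]
    field_simp
  · -- degenerate case: P ≡ 0 on m > 0
    have hzero : ∀ (p : ℝ × ℝ) (m : ℝ), 0 < m → P p m = 0 := by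
      intro p m hm
      rw [hP p m hm]
      apply Real.sSup_of_not_bddAbove
      intro ⟨M, hM⟩
      apply hbdd
      refine ⟨-(|p.1| * l + |p.2| * l / m) - M, ?_⟩
      rintro x ⟨q, hq, rfl⟩
      obtain ⟨h1, h2⟩ := hcoord q hq
      have hMq : p.1 * q.1 + p.2 * q.2 / m - Ψ q ≤ M := hM ⟨q, hq, rfl⟩
      have e1 : -(|p.1| * l) ≤ p.1 * q.1 := by
        have : |p.1 * q.1| ≤ |p.1| * l := by
          rw [abs_mul]; gcongr
        linarith [neg_abs_le (p.1 * q.1)]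
      have e2 : -(|p.2| * l) ≤ p.2 * q.2 := by
        have : |p.2 * q.2| ≤ |p.2| * l := by
          rw [abs_mul]; gcongr
        linarith [neg_abs_le (p.2 * q.2)]
      have e3 : -(|p.2| * l) / m ≤ p.2 * q.2 / m := by gcongr
      have e4 : -(|p.2| * l / m) = -(|p.2| * l) / m := by ring
      linarith [e3, hMq]
    have hdm : deriv (fun m => P p0 m) m0 = 0 := by
      have hev : (fun m => P p0 m) =ᶠ[nhds m0] (fun _ => (0 : ℝ)) := by
        filter_upwards [Ioi_mem_nhds hm0pos] with m hm
        exact hzero p0 m hm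
      rw [hev.deriv_eq, deriv_const]
    have hdp : fderiv ℝ (fun p => P p m0) p0 = 0 := by
      have : (fun p : ℝ × ℝ => P p m0) = fun _ => (0 : ℝ) := by
        funext p; exact hzero p m0 hm0pos
      rw [this, fderiv_fun_const]
      rfl
    rw [hdm, hdp]
    simp
end

section
/- Let A > 0 and P : W × I_0 → ℝ be continuous with P ≤ A. Then for each z ∈ [0,H], the function ϱ ↦ S[P](ϱ,z) = ∫_0^ϱ (f_0(s) − P(s,z,θ_0(z))) (2f_0(s)/Ω²)² ds attains a minimum over [0, 1/(2r_0²)); moreover there exists M_* (depending only on A, r_0, Ω, H) with 2r_0² M_* < 1 such that every minimizer ϱ̄ satisfies 0 ≤ ϱ̄ ≤ M_*. -/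
/-- f₀(s) = r₀²Ω²/(2(1 − 2r₀²s)). -/
noncomputable def f0fn (r0 Ω s : ℝ) : ℝ := r0^2 * Ω^2 / (2 * (1 - 2 * r0^2 * s))

/-- for continuous P ≤ A, ϱ ↦ S[P](ϱ,z) attains a minimum over
[0,1/(2r₀²)) for each z ∈ [0,H], and there is M⋆ (depending only on A, r₀, Ω, H)
with 2r₀²M⋆ < 1 such that every minimizer lies in [0, M⋆]. -/
theorem S_has_min_and_uniform_bound
    (r0 Ω H A : ℝ) (hr0 : 0 < r0) (hΩ : 0 < Ω) (hH : 0 < H) (hA : 0 < A) :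
    ∃ Mstar : ℝ, 0 ≤ Mstar ∧ 2 * r0^2 * Mstar < 1 ∧
      ∀ (θ0 : ℝ → ℝ), Continuous θ0 →
      ∀ (P : ℝ → ℝ → ℝ → ℝ),
        Continuous (fun x : ℝ × ℝ × ℝ => P x.1 x.2.1 x.2.2) →
        (∀ s z m, P s z m ≤ A) →
        ∀ z ∈ Set.Icc (0:ℝ) H,
          (∃ ϱ ∈ Set.Ico (0:ℝ) (1/(2*r0^2)),
            IsMinOn (fun ϱ' => ∫ s in (0:ℝ)..ϱ',
                (f0fn r0 Ω s - P s z (θ0 z)) * (2 * f0fn r0 Ω s / Ω^2)^2)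
              (Set.Ico (0:ℝ) (1/(2*r0^2))) ϱ) ∧
          (∀ ϱ ∈ Set.Ico (0:ℝ) (1/(2*r0^2)),
            IsMinOn (fun ϱ' => ∫ s in (0:ℝ)..ϱ',
                (f0fn r0 Ω s - P s z (θ0 z)) * (2 * f0fn r0 Ω s / Ω^2)^2)
              (Set.Ico (0:ℝ) (1/(2*r0^2))) ϱ →
            ϱ ≤ Mstar) := by
  have hr2 : (0:ℝ) < r0^2 := by positivity
  set b : ℝ := 1/(2*r0^2) with hb
  have hb0 : 0 < b := by positivity
  set c : ℝ := r0^2*Ω^2/(2*(A+1)) with hc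
  have hc0 : 0 < c := by positivity
  set M : ℝ := max 0 ((1 - c)/(2*r0^2)) with hM
  have hM0 : 0 ≤ M := le_max_left _ _
  have hMb : M < b := by
    apply max_lt hb0
    rw [hb]
    apply div_lt_div_of_pos_right (by linarith) (by positivity)
  have hbM : 2 * r0^2 * M < 1 := by
    have : 2 * r0^2 * M < 2 * r0^2 * b := by
      exact mul_lt_mul_of_pos_left hMb (by positivity)
    have hbb : 2 * r0^2 * b = 1 := by
      rw [hb]; field_simp
    linarith
  refine ⟨M, hM0, hbM, ?_⟩
  intro θ0 hθ0 P hP hPA z hz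
  set m := θ0 z with hm
  set g : ℝ → ℝ := fun s => (f0fn r0 Ω s - P s z m) * (2 * f0fn r0 Ω s / Ω^2)^2 with hg
  set S : ℝ → ℝ := fun ϱ' => ∫ s in (0:ℝ)..ϱ', g s with hS
  -- positivity of 1 - 2 r0² s for s < b
  have hden : ∀ s : ℝ, s < b → 0 < 1 - 2*r0^2*s := by
    intro s hs
    rw [hb] at hs
    have := (lt_div_iff₀ (by positivity : (0:ℝ) < 2*r0^2)).mp hs
    nlinarith
  -- f0 lower bound past M
  have hf0_ge : ∀ s : ℝ, M ≤ s → s < b → A + 1 ≤ f0fn r0 Ω s := by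
    intro s hs1 hs2
    have h1 : 0 < 1 - 2*r0^2*s := hden s hs2
    have h2 : 1 - 2*r0^2*s ≤ c := by
      have h3 : (1 - c)/(2*r0^2) ≤ s := le_trans (le_max_right _ _) hs1
      have := (div_le_iff₀ (by positivity : (0:ℝ) < 2*r0^2)).mp h3
      nlinarith
    have heq : r0^2*Ω^2/(2*c) = A+1 := by
      rw [hc]; field_simp
    rw [f0fn, ← heq]
    exact div_le_div_of_nonneg_left (by positivity) (by linarith) (by linarith)
  -- continuity of g on Iio b
  have hgcont : ContinuousOn g (Set.Iio b) := by
    have hf0c : ContinuousOn (f0fn r0 Ω) (Set.Iio b) := by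
      apply ContinuousOn.div continuousOn_const
      · fun_prop
      · intro s hs
        have := hden s hs
        positivity
    have hPc : Continuous (fun s : ℝ => P s z m) :=
      hP.comp (continuous_id.prodMk (continuous_const.prodMk continuous_const))
    exact ((hf0c.sub hPc.continuousOn).mul
      (((hf0c.const_smul 2).div_const (Ω^2)).pow 2)).congr (by
        intro s hs; simp [hg, smul_eq_mul])
  -- interval integrability
  have hgint : ∀ x y : ℝ, x ∈ Set.Ico (0:ℝ) b → y ∈ Set.Ico (0:ℝ) b →
      IntervalIntegrable g MeasureTheory.volume x y := by
    intro x y hx hy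
    apply (hgcont.mono ?_).intervalIntegrable
    intro s hs
    have h1 := hs.2
    rw [Set.mem_Iio]
    calc s ≤ max x y := h1
      _ < b := max_lt hx.2 hy.2
  set c0 : ℝ := (2*(A+1)/Ω^2)^2 with hc0def
  have hc00 : 0 < c0 := by positivity
  -- key growth estimate
  have key : ∀ x y : ℝ, M ≤ x → x ≤ y → y < b → S x + c0*(y-x) ≤ S y := by
    intro x y hx hxy hyb
    have hxb : x < b := lt_of_le_of_lt hxy hyb
    have hx0 : (0:ℝ) ≤ x := le_trans hM0 hx
    have hxm : x ∈ Set.Ico (0:ℝ) b := ⟨hx0, hxb⟩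
    have hym : y ∈ Set.Ico (0:ℝ) b := ⟨le_trans hx0 hxy, hyb⟩
    have h0m : (0:ℝ) ∈ Set.Ico (0:ℝ) b := ⟨le_refl _, hb0⟩
    have hadd : S x + ∫ s in x..y, g s = S y :=
      intervalIntegral.integral_add_adjacent_intervals (hgint 0 x h0m hxm) (hgint x y hxm hym)
    have hmono : c0 * (y - x) ≤ ∫ s in x..y, g s := by
      have hconst : (∫ _ in x..y, c0) = c0 * (y - x) := by
        simp [mul_comm]
      rw [← hconst]
      apply intervalIntegral.integral_mono_on hxy (intervalIntegrable_const) (hgint x y hxm hym)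
      intro s hs
      have hsM : M ≤ s := le_trans hx hs.1
      have hsb : s < b := lt_of_le_of_lt hs.2 hyb
      have hf := hf0_ge s hsM hsb
      have hPs := hPA s z m
      have h1 : (1:ℝ) ≤ f0fn r0 Ω s - P s z m := by linarith
      have h2 : (2*(A+1)/Ω^2)^2 ≤ (2 * f0fn r0 Ω s / Ω^2)^2 := by
        gcongr <;> linarith
      have h3 : (0:ℝ) ≤ (2 * f0fn r0 Ω s / Ω^2)^2 := sq_nonneg _
      calc c0 = 1 * c0 := (one_mul _).symm
        _ ≤ (f0fn r0 Ω s - P s z m) * (2 * f0fn r0 Ω s / Ω^2)^2 :=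
          mul_le_mul h1 h2 (le_of_lt hc00) (by linarith)
        _ = g s := rfl
    linarith
  -- continuity of S on Icc 0 M
  have hScont : ContinuousOn S (Set.Icc 0 M) := by
    have huIcc : Set.uIcc (0:ℝ) M = Set.Icc 0 M := Set.uIcc_of_le hM0
    have hint : MeasureTheory.IntegrableOn g (Set.uIcc (0:ℝ) M) MeasureTheory.volume := by
      rw [huIcc]
      apply (hgcont.mono ?_).integrableOn_Icc
      intro s hs
      exact lt_of_le_of_lt hs.2 hMb
    have := intervalIntegral.continuousOn_primitive_interval hint
    rwa [huIcc] at this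
  -- existence of minimizer on the compact [0,M]
  obtain ⟨ϱ, hϱmem, hϱmin⟩ := isCompact_Icc.exists_isMinOn
    (Set.nonempty_Icc.mpr hM0) hScont
  constructor
  · refine ⟨ϱ, ⟨hϱmem.1, lt_of_le_of_lt hϱmem.2 hMb⟩, ?_⟩
    rw [isMinOn_iff]
    intro x hx
    rcases le_or_gt x M with hxM | hxM
    · exact hϱmin ⟨hx.1, hxM⟩
    · have h1 : S ϱ ≤ S M := hϱmin (Set.right_mem_Icc.mpr hM0)
      have h2 := key M x (le_refl M) (le_of_lt hxM) hx.2
      have h3 : 0 ≤ c0 * (x - M) := by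
        apply mul_nonneg (le_of_lt hc00); linarith
      calc S ϱ ≤ S M := h1
        _ ≤ S x := by linarith
  · intro ϱ' hϱ' hmin'
    by_contra hcon
    push_neg at hcon
    have h1 : S ϱ' ≤ S M := hmin' ⟨hM0, hMb⟩
    have h2 := key M ϱ' (le_refl M) (le_of_lt hcon) hϱ'.2
    have h3 : 0 < c0 * (ϱ' - M) := by
      apply mul_pos hc00; linarith
    linarith
end
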